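/- Let (B,g_B) and (F,g_F) be semi-regular singular semi-Riemannian manifolds, f : B → ℝ smooth with df ∈ Ω¹_s(B), and let (M,g) = B ×_f F be the warped product (which is semi-regular). For smooth vector fields X, Y, Z, T : B → E_B with lifts X̃, Ỹ, Z̃, T̃ on M, the Riemann curvature tensors satisfy R(X̃,Ỹ,Z̃,T̃)(p,q) = R_B(X,Y,Z,T)(p) for all (p,q) ∈ M, where R is the Riemann curvature of (M,g) and R_B that of (B,g_B). -/

import Mathlib

/-! Lifts of base fields see only the `g_B` part of the warped metric, their brackets are lifts,
and derivatives of functions pulled back from `B` are pulled back; hence `κ(X̃,Ỹ,Z̃)` is the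
pullback of `κ_B(X,Y,Z)`, while `κ(X̃,Ỹ,Ṽ) = 0` for vertical `Ṽ`. So a witness of `κ(X̃,Ỹ,•)`
has first component representing `κ_B(X,Y,•)` and second component in the radical of `f² g_F`,
and all terms of the two curvature expressions agree. -/

noncomputable section

section Basic

variable {E : Type*} [NormedAddCommGroup E] [NormedSpace ℝ E]

/-- The Lie bracket of two vector fields. -/
def lieB (X Y : E → E) : E → E :=
  fun p => fderiv ℝ Y p (X p) - fderiv ℝ X p (Y p)

/-- The Koszul form of a singular metric `g`. -/
def koszul (g : E → (E →L[ℝ] E →L[ℝ] ℝ)) (X Y Z : E → E) : E → ℝ :=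
  fun p =>
    (1 / 2) * (fderiv ℝ (fun x => g x (Y x) (Z x)) p (X p)
      + fderiv ℝ (fun x => g x (Z x) (X x)) p (Y p)
      - fderiv ℝ (fun x => g x (X x) (Y x)) p (Z p)
      - g p (X p) (lieB Y Z p)
      + g p (Y p) (lieB Z X p)
      + g p (Z p) (lieB X Y p))

/-- `g` is a singular (semi-Riemannian) metric on `M`: smooth and pointwise symmetric. -/
def IsSingularMetric (M : Set E) (g : E → (E →L[ℝ] E →L[ℝ] ℝ)) : Prop :=
  ContDiffOn ℝ (⊤ : ℕ∞) g M ∧ ∀ p ∈ M, ∀ u v : E, g p u v = g p v u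

/-- `w` represents the 1-form `κ(X,Y,_)` at `p` via the metric `g`. -/
def KoszulWitness (M : Set E) (g : E → (E →L[ℝ] E →L[ℝ] ℝ)) (X Y : E → E)
    (p w : E) : Prop :=
  ∀ Z : E → E, ContDiffOn ℝ (⊤ : ℕ∞) Z M → koszul g X Y Z p = g p w (Z p)

/-- `(M,g)` is radical-stationary. -/
def RadicalStationary (M : Set E) (g : E → (E →L[ℝ] E →L[ℝ] ℝ)) : Prop :=
  ∀ X Y : E → E, ContDiffOn ℝ (⊤ : ℕ∞) X M → ContDiffOn ℝ (⊤ : ℕ∞) Y M →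
    ∀ p ∈ M, ∃ w : E, KoszulWitness M g X Y p w

/-- `(M,g)` is semi-regular: radical-stationary and every covariant contraction
`κ(X,Y,•)κ(Z,T,•)` is a (well-defined) smooth function on `M`. -/
def SemiRegular (M : Set E) (g : E → (E →L[ℝ] E →L[ℝ] ℝ)) : Prop :=
  RadicalStationary M g ∧
  ∀ X Y Z T : E → E, ContDiffOn ℝ (⊤ : ℕ∞) X M → ContDiffOn ℝ (⊤ : ℕ∞) Y M →
    ContDiffOn ℝ (⊤ : ℕ∞) Z M → ContDiffOn ℝ (⊤ : ℕ∞) T M →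
    ∃ k : E → ℝ, ContDiffOn ℝ (⊤ : ℕ∞) k M ∧
      ∀ p ∈ M, ∀ w₁ w₂ : E,
        KoszulWitness M g X Y p w₁ → KoszulWitness M g Z T p w₂ →
          k p = g p w₁ w₂

/-- The differential of `f` is radical-annihilator on `B`. -/
def DiffRadicalAnnihilator (B : Set E) (g : E → (E →L[ℝ] E →L[ℝ] ℝ))
    (f : E → ℝ) : Prop :=
  ∀ p ∈ B, ∃ w : E, ∀ z : E, fderiv ℝ f p z = g p w z

/-- `df ∈ Ω¹_s(B)`: `df` is radical-annihilator and the 1-forms `Y ↦ (∇_X df)(Y)`,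
`(∇_X df)(Y) := X(Y f) - κ(X,Y,•)(df)(•)`, are radical-annihilator. -/
def DiffInOmega1s (B : Set E) (g : E → (E →L[ℝ] E →L[ℝ] ℝ)) (f : E → ℝ) : Prop :=
  DiffRadicalAnnihilator B g f ∧
  ∀ X : E → E, ContDiffOn ℝ (⊤ : ℕ∞) X B → ∀ p ∈ B, ∃ w : E,
    ∀ Y : E → E, ContDiffOn ℝ (⊤ : ℕ∞) Y B → ∀ w₁ w₂ : E,
      KoszulWitness B g X Y p w₁ → (∀ z : E, fderiv ℝ f p z = g p w₂ z) →
        fderiv ℝ (fun x => fderiv ℝ f x (Y x)) p (X p) - g p w₁ w₂ = g p w (Y p)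

/-- The value of the Riemann curvature tensor
`R(X,Y,Z,T) = X κ(Y,Z,T) - Y κ(X,Z,T) - κ([X,Y],Z,T) + κ(X,Z,•)κ(Y,T,•) - κ(Y,Z,•)κ(X,T,•)`
at `p`, written using vectors `w₁, w₂, w₃, w₄` representing the 1-forms
`κ(X,Z,_), κ(Y,T,_), κ(Y,Z,_), κ(X,T,_)` at `p`, so that the covariant contractions
are `g p w₁ w₂` and `g p w₃ w₄`. -/
def riemannExpr (g : E → (E →L[ℝ] E →L[ℝ] ℝ)) (X Y Z T : E → E) (p : E)
    (w₁ w₂ w₃ w₄ : E) : ℝ :=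
  fderiv ℝ (koszul g Y Z T) p (X p) - fderiv ℝ (koszul g X Z T) p (Y p)
    - koszul g (lieB X Y) Z T p + g p w₁ w₂ - g p w₃ w₄

end Basic

section Warped

variable {E₁ E₂ : Type*} [NormedAddCommGroup E₁] [NormedSpace ℝ E₁]
  [NormedAddCommGroup E₂] [NormedSpace ℝ E₂]

/-- Lift a bilinear form on `E₁` to `E₁ × E₂` (acting through the first factor). -/
def liftBilinFst (b : E₁ →L[ℝ] E₁ →L[ℝ] ℝ) :
    (E₁ × E₂) →L[ℝ] (E₁ × E₂) →L[ℝ] ℝ :=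
  (((b.comp (ContinuousLinearMap.fst ℝ E₁ E₂)).flip).comp
    (ContinuousLinearMap.fst ℝ E₁ E₂)).flip

/-- Lift a bilinear form on `E₂` to `E₁ × E₂` (acting through the second factor). -/
def liftBilinSnd (b : E₂ →L[ℝ] E₂ →L[ℝ] ℝ) :
    (E₁ × E₂) →L[ℝ] (E₁ × E₂) →L[ℝ] ℝ :=
  (((b.comp (ContinuousLinearMap.snd ℝ E₁ E₂)).flip).comp
    (ContinuousLinearMap.snd ℝ E₁ E₂)).flip

/-- The warped product metric `g = g_B + f² g_F` on `B × F ⊆ E₁ × E₂`: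
`g (p,q) ((u₁,u₂),(v₁,v₂)) = g_B p u₁ v₁ + f(p)² * g_F q u₂ v₂`. -/
def warpedMetric (gB : E₁ → (E₁ →L[ℝ] E₁ →L[ℝ] ℝ))
    (gF : E₂ → (E₂ →L[ℝ] E₂ →L[ℝ] ℝ)) (f : E₁ → ℝ) :
    (E₁ × E₂) → ((E₁ × E₂) →L[ℝ] (E₁ × E₂) →L[ℝ] ℝ) :=
  fun x => liftBilinFst (gB x.1) + (f x.1) ^ 2 • liftBilinSnd (gF x.2)

/-- The lift to `E₁ × E₂` of a vector field on the base. -/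
def liftVecB (X : E₁ → E₁) : (E₁ × E₂) → (E₁ × E₂) := fun x => (X x.1, 0)

/-- The lift to `E₁ × E₂` of a vector field on the fiber. -/
def liftVecF (V : E₂ → E₂) : (E₁ × E₂) → (E₁ × E₂) := fun x => (0, V x.2)

end Warped

theorem lieB_skew {E : Type*} [NormedAddCommGroup E] [NormedSpace ℝ E] (X Y : E → E) :
    -lieB Y X = lieB X Y := by
  funext p
  simp [lieB]

section ProdDeriv

variable {𝕜 : Type*} [NontriviallyNormedField 𝕜]
  {E F G : Type*} [NormedAddCommGroup E] [NormedSpace 𝕜 E] [NormedAddCommGroup F]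
  [NormedSpace 𝕜 F] [NormedAddCommGroup G] [NormedSpace 𝕜 G]

theorem differentiableAt_comp_fst_iff {h : E → G} {x : E × F} :
    DifferentiableAt 𝕜 (fun y : E × F => h y.1) x ↔ DifferentiableAt 𝕜 h x.1 :=
  ⟨fun hd => by
    have hd' : DifferentiableAt 𝕜 (fun y : E × F => h y.1) (x.1, x.2) := hd
    have hg : DifferentiableAt 𝕜 (fun z : E => (z, x.2)) x.1 :=
      differentiableAt_id.prodMk (differentiableAt_const _)
    simpa [Function.comp_def] using hd'.comp x.1 hg,
    fun hd => hd.comp x differentiableAt_fst⟩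

theorem differentiableAt_comp_snd_iff {h : F → G} {x : E × F} :
    DifferentiableAt 𝕜 (fun y : E × F => h y.2) x ↔ DifferentiableAt 𝕜 h x.2 :=
  ⟨fun hd => by
    have hd' : DifferentiableAt 𝕜 (fun y : E × F => h y.2) (x.1, x.2) := hd
    have hg : DifferentiableAt 𝕜 (fun z : F => (x.1, z)) x.2 :=
      (differentiableAt_const _).prodMk differentiableAt_id
    simpa [Function.comp_def] using hd'.comp x.2 hg,
    fun hd => hd.comp x differentiableAt_snd⟩

theorem fderiv_comp_fst (h : E → G) (x : E × F) :
    fderiv 𝕜 (fun y : E × F => h y.1) x = (fderiv 𝕜 h x.1).comp (ContinuousLinearMap.fst 𝕜 E F) := by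
  by_cases hd : DifferentiableAt 𝕜 h x.1
  · exact (hd.hasFDerivAt.comp x hasFDerivAt_fst).fderiv
  · rw [fderiv_zero_of_not_differentiableAt hd,
      fderiv_zero_of_not_differentiableAt (mt differentiableAt_comp_fst_iff.1 hd),
      ContinuousLinearMap.zero_comp]

theorem fderiv_comp_snd (h : F → G) (x : E × F) :
    fderiv 𝕜 (fun y : E × F => h y.2) x = (fderiv 𝕜 h x.2).comp (ContinuousLinearMap.snd 𝕜 E F) := by
  by_cases hd : DifferentiableAt 𝕜 h x.2
  · exact (hd.hasFDerivAt.comp x hasFDerivAt_snd).fderiv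
  · rw [fderiv_zero_of_not_differentiableAt hd,
      fderiv_zero_of_not_differentiableAt (mt differentiableAt_comp_snd_iff.1 hd),
      ContinuousLinearMap.zero_comp]

theorem fderiv_prodMk_const (k : G → E) (c : F) (x : G) :
    fderiv 𝕜 (fun y => (k y, c)) x = (ContinuousLinearMap.inl 𝕜 E F).comp (fderiv 𝕜 k x) := by
  by_cases hk : DifferentiableAt 𝕜 k x
  · rw [hk.fderiv_prodMk (differentiableAt_const c), fderiv_fun_const]
    ext u <;> simp
  · rw [fderiv_zero_of_not_differentiableAt hk,
      fderiv_zero_of_not_differentiableAt (fun h => hk h.fst), ContinuousLinearMap.comp_zero]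

theorem fderiv_const_prodMk (c : E) (k : G → F) (x : G) :
    fderiv 𝕜 (fun y => (c, k y)) x = (ContinuousLinearMap.inr 𝕜 E F).comp (fderiv 𝕜 k x) := by
  by_cases hk : DifferentiableAt 𝕜 k x
  · rw [(differentiableAt_const c).fderiv_prodMk hk, fderiv_fun_const]
    ext u <;> simp
  · rw [fderiv_zero_of_not_differentiableAt hk,
      fderiv_zero_of_not_differentiableAt (fun h => hk h.snd), ContinuousLinearMap.comp_zero]

end ProdDeriv

section WarpedKoszul

variable {E₁ E₂ : Type*} [NormedAddCommGroup E₁] [NormedSpace ℝ E₁]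
  [NormedAddCommGroup E₂] [NormedSpace ℝ E₂]
  {gB : E₁ → (E₁ →L[ℝ] E₁ →L[ℝ] ℝ)} {gF : E₂ → (E₂ →L[ℝ] E₂ →L[ℝ] ℝ)} {f : E₁ → ℝ}

@[simp]
theorem warpedMetric_apply (x u v : E₁ × E₂) :
    warpedMetric gB gF f x u v = gB x.1 u.1 v.1 + f x.1 ^ 2 * gF x.2 u.2 v.2 := by
  simp [warpedMetric, liftBilinFst, liftBilinSnd]

theorem fderiv_liftVecB_apply (X : E₁ → E₁) (x u : E₁ × E₂) :
    fderiv ℝ (liftVecB X) x u = (fderiv ℝ X x.1 u.1, 0) := by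
  rw [show liftVecB X = fun y : E₁ × E₂ => (X y.1, (0 : E₂)) from rfl,
    fderiv_prodMk_const (fun y : E₁ × E₂ => X y.1), fderiv_comp_fst]
  simp

theorem fderiv_liftVecF_apply (V : E₂ → E₂) (x u : E₁ × E₂) :
    fderiv ℝ (liftVecF V) x u = (0, fderiv ℝ V x.2 u.2) := by
  rw [show liftVecF V = fun y : E₁ × E₂ => ((0 : E₁), V y.2) from rfl,
    fderiv_const_prodMk 0 (fun y : E₁ × E₂ => V y.2), fderiv_comp_snd]
  simp

theorem lieB_liftVecB (X Y : E₁ → E₁) :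
    lieB (liftVecB X : E₁ × E₂ → E₁ × E₂) (liftVecB Y) = liftVecB (lieB X Y) := by
  funext x
  simp [lieB, liftVecB, fderiv_liftVecB_apply]

theorem lieB_liftVecB_liftVecF (X : E₁ → E₁) (V : E₂ → E₂) :
    lieB (liftVecB X) (liftVecF V) = 0 := by
  funext x
  simp [lieB, liftVecB, liftVecF, fderiv_liftVecB_apply, fderiv_liftVecF_apply]

theorem koszul_liftVecB (X Y Z : E₁ → E₁) :
    koszul (warpedMetric gB gF f) (liftVecB X) (liftVecB Y) (liftVecB Z : E₁ × E₂ → E₁ × E₂)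
      = fun x => koszul gB X Y Z x.1 := by
  funext x
  simp [koszul, liftVecB, lieB_liftVecB, fderiv_comp_fst (fun p => gB p (X p) (Y p)),
    fderiv_comp_fst (fun p => gB p (Y p) (Z p)), fderiv_comp_fst (fun p => gB p (Z p) (X p))]

theorem koszul_liftVecB_liftVecF (X Z : E₁ → E₁) (V : E₂ → E₂) :
    koszul (warpedMetric gB gF f) (liftVecB X) (liftVecB Z) (liftVecF V) = 0 := by
  have hswap : lieB (liftVecF V) (liftVecB X) = 0 := by
    rw [← neg_eq_zero, lieB_skew, lieB_liftVecB_liftVecF]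
  funext x
  simp [koszul, liftVecB, liftVecF, lieB_liftVecB, lieB_liftVecB_liftVecF, hswap,
    fderiv_comp_fst (fun p => gB p (X p) (Z p))]

end WarpedKoszul

section WarpedWitness

variable {E₁ E₂ : Type*} [NormedAddCommGroup E₁] [NormedSpace ℝ E₁]
  [NormedAddCommGroup E₂] [NormedSpace ℝ E₂]
  {gB : E₁ → (E₁ →L[ℝ] E₁ →L[ℝ] ℝ)} {gF : E₂ → (E₂ →L[ℝ] E₂ →L[ℝ] ℝ)} {f : E₁ → ℝ}
  {M : Set (E₁ × E₂)} {N : Set E₁} {U V : E₁ → E₁} {x : E₁ × E₂} {w : E₁ × E₂} {v : E₁}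

theorem KoszulWitness.liftVecB_fst
    (hw : KoszulWitness M (warpedMetric gB gF f) (liftVecB U) (liftVecB V) x w)
    (hv : KoszulWitness N gB U V x.1 v) (z : E₁) :
    gB x.1 w.1 z = gB x.1 v z := by
  calc gB x.1 w.1 z
      = koszul (warpedMetric gB gF f) (liftVecB U) (liftVecB V) (liftVecB fun _ => z) x := by
        rw [hw (liftVecB fun _ => z) contDiffOn_const]
        simp [liftVecB]
    _ = koszul gB U V (fun _ => z) x.1 := by rw [koszul_liftVecB]
    _ = gB x.1 v z := hv _ contDiffOn_const

theorem KoszulWitness.liftVecB_snd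
    (hw : KoszulWitness M (warpedMetric gB gF f) (liftVecB U) (liftVecB V) x w) (u : E₂) :
    f x.1 ^ 2 * gF x.2 w.2 u = 0 := by
  have h := hw (liftVecF fun _ => u) contDiffOn_const
  rw [koszul_liftVecB_liftVecF] at h
  simpa [liftVecF] using h.symm

theorem warpedMetric_koszulWitness {U' V' : E₁ → E₁} {w' : E₁ × E₂} {v' : E₁}
    (hsym : ∀ a b : E₁, gB x.1 a b = gB x.1 b a)
    (hw : KoszulWitness M (warpedMetric gB gF f) (liftVecB U) (liftVecB V) x w)
    (hv : KoszulWitness N gB U V x.1 v)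
    (hw' : KoszulWitness M (warpedMetric gB gF f) (liftVecB U') (liftVecB V') x w')
    (hv' : KoszulWitness N gB U' V' x.1 v') :
    warpedMetric gB gF f x w w' = gB x.1 v v' :=
  calc warpedMetric gB gF f x w w' = gB x.1 w.1 w'.1 := by
        rw [warpedMetric_apply, hw.liftVecB_snd, add_zero]
    _ = gB x.1 v' v := by rw [hw.liftVecB_fst hv, hsym, hw'.liftVecB_fst hv']
    _ = gB x.1 v v' := hsym _ _

end WarpedWitness

theorem warpedProduct_riemann_base_general
    {E₁ E₂ : Type*} [NormedAddCommGroup E₁] [NormedSpace ℝ E₁]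
    [NormedAddCommGroup E₂] [NormedSpace ℝ E₂]
    (B : Set E₁) (F : Set E₂)
    (gB : E₁ → (E₁ →L[ℝ] E₁ →L[ℝ] ℝ)) (gF : E₂ → (E₂ →L[ℝ] E₂ →L[ℝ] ℝ))
    (hgB : IsSingularMetric B gB)
    (f : E₁ → ℝ)
    (X Y Z T : E₁ → E₁) :
    ∀ p ∈ B, ∀ q ∈ F, ∀ w₁ w₂ w₃ w₄ : E₁ × E₂,
      KoszulWitness (B ×ˢ F) (warpedMetric gB gF f) (liftVecB X) (liftVecB Z) (p, q) w₁ →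
      KoszulWitness (B ×ˢ F) (warpedMetric gB gF f) (liftVecB Y) (liftVecB T) (p, q) w₂ →
      KoszulWitness (B ×ˢ F) (warpedMetric gB gF f) (liftVecB Y) (liftVecB Z) (p, q) w₃ →
      KoszulWitness (B ×ˢ F) (warpedMetric gB gF f) (liftVecB X) (liftVecB T) (p, q) w₄ →
      ∀ v₁ v₂ v₃ v₄ : E₁,
        KoszulWitness B gB X Z p v₁ → KoszulWitness B gB Y T p v₂ →
        KoszulWitness B gB Y Z p v₃ → KoszulWitness B gB X T p v₄ →
        riemannExpr (warpedMetric gB gF f) (liftVecB X) (liftVecB Y) (liftVecB Z)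
            (liftVecB T) (p, q) w₁ w₂ w₃ w₄
          = riemannExpr gB X Y Z T p v₁ v₂ v₃ v₄ := by
  intro p hp q _ w₁ w₂ w₃ w₄ hw₁ hw₂ hw₃ hw₄ v₁ v₂ v₃ v₄ hv₁ hv₂ hv₃ hv₄
  have hsym := hgB.2 p hp
  simp only [riemannExpr, koszul_liftVecB, lieB_liftVecB, fderiv_comp_fst,
    ContinuousLinearMap.comp_apply, liftVecB, ContinuousLinearMap.coe_fst',
    warpedMetric_koszulWitness hsym hw₁ hv₁ hw₂ hv₂, warpedMetric_koszulWitness hsym hw₃ hv₃ hw₄ hv₄]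

/-- For a semi-regular warped product, the Riemann curvature evaluated
on lifts of base vector fields is the lift of the Riemann curvature of the base. -/
theorem warpedProduct_riemann_base
    {E₁ E₂ : Type*} [NormedAddCommGroup E₁] [NormedSpace ℝ E₁] [FiniteDimensional ℝ E₁]
    [NormedAddCommGroup E₂] [NormedSpace ℝ E₂] [FiniteDimensional ℝ E₂]
    (B : Set E₁) (F : Set E₂) (hB : IsOpen B) (hF : IsOpen F)
    (gB : E₁ → (E₁ →L[ℝ] E₁ →L[ℝ] ℝ)) (gF : E₂ → (E₂ →L[ℝ] E₂ →L[ℝ] ℝ))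
    (hgB : IsSingularMetric B gB) (hgF : IsSingularMetric F gF)
    (hsB : SemiRegular B gB) (hsF : SemiRegular F gF)
    (f : E₁ → ℝ) (hf : ContDiffOn ℝ (⊤ : ℕ∞) f B)
    (hdf : DiffInOmega1s B gB f)
    (X Y Z T : E₁ → E₁)
    (hX : ContDiffOn ℝ (⊤ : ℕ∞) X B) (hY : ContDiffOn ℝ (⊤ : ℕ∞) Y B)
    (hZ : ContDiffOn ℝ (⊤ : ℕ∞) Z B) (hT : ContDiffOn ℝ (⊤ : ℕ∞) T B) :
    ∀ p ∈ B, ∀ q ∈ F, ∀ w₁ w₂ w₃ w₄ : E₁ × E₂,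
      KoszulWitness (B ×ˢ F) (warpedMetric gB gF f) (liftVecB X) (liftVecB Z) (p, q) w₁ →
      KoszulWitness (B ×ˢ F) (warpedMetric gB gF f) (liftVecB Y) (liftVecB T) (p, q) w₂ →
      KoszulWitness (B ×ˢ F) (warpedMetric gB gF f) (liftVecB Y) (liftVecB Z) (p, q) w₃ →
      KoszulWitness (B ×ˢ F) (warpedMetric gB gF f) (liftVecB X) (liftVecB T) (p, q) w₄ →
      ∀ v₁ v₂ v₃ v₄ : E₁,
        KoszulWitness B gB X Z p v₁ → KoszulWitness B gB Y T p v₂ →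
        KoszulWitness B gB Y Z p v₃ → KoszulWitness B gB X T p v₄ →
        riemannExpr (warpedMetric gB gF f) (liftVecB X) (liftVecB Y) (liftVecB Z)
            (liftVecB T) (p, q) w₁ w₂ w₃ w₄
          = riemannExpr gB X Y Z T p v₁ v₂ v₃ v₄ :=
  warpedProduct_riemann_base_general B F gB gF hgB f X Y Z T

end
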